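/- arXiv:1703.00135 — 2 statements merged into one kernel-verified Lean document; each statement's English description precedes it below -/
import Mathlib

section
/- Let 1 ≤ s ≤ N, 1 ≤ k ≤ m ≤ N, λ > 0, and set η = (s + λ²k)/min{s, λ²k}. If A ∈ ℂ^{m×N} satisfies the Restricted Isometry Property for the sparse corruptions problem of order (2s, 2k) with constant δ_{2s,2k} < 1/√(1 + (1/(2√2) + √η)²), then A satisfies the ℓ²-robust null space property of order (s,k) with weight λ and constants ρ = 2√2·δ_{2s,2k}·√η / (2√2·√(1 − δ_{2s,2k}²) − δ_{2s,2k}) and τ = 2√2·√(1 + δ_{2s,2k}) / (2√2·√(1 − δ_{2s,2k}²) − δ_{2s,2k}), and these constants satisfy 0 < ρ < 1 and τ > 0. -/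
/-!
Split `x` into blocks `S₀, S₁, …` of `s` coordinates of nonincreasing modulus and `c` into blocks
`T₀, T₁, …` of `k` coordinates, and write `vⱼ = (x_{Sⱼ}, c_{Tⱼ})`, `Bⱼ = A x_{Sⱼ} + c_{Tⱼ}`.
The RIP applied to `v₀ + t vⱼ` for every real `t` is a pair of quadratic inequalities in `t`;
their discriminants bound `|Re ⟪B₀, Bⱼ⟫| ‖v₀‖` by
`√((‖B₀‖² - (1 - δ)‖v₀‖²)((1 + δ)‖v₀‖² - ‖B₀‖²)) ‖vⱼ‖`. Expanding
`‖B₀‖² = Re ⟪B₀, Ax + c⟫ - ∑_{j ≥ 1} Re ⟪B₀, Bⱼ⟫` then yields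
`√(1 - δ²) ‖v₀‖ ≤ √(1 + δ) ‖Ax + c‖ + δ ∑_{j ≥ 1} ‖vⱼ‖`.
On each block the sorting inequality `‖u‖₂ ≤ ‖u‖₁/√s + (√s/4)(max |uᵢ| - min |uᵢ|)` telescopes to
`∑_{j ≥ 1} ‖vⱼ‖ ≤ (‖x_{S₀ᶜ}‖₁ + λ‖c_{T₀ᶜ}‖₁)/√(min(s, λ²k)) + ‖v₀‖/(2√2)`, and solving for `‖v₀‖`
gives the null space property; the hypothesis on `δ` is exactly `ρ < 1`.
-/

open Finset Matrix MeasureTheory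

noncomputable def l1norm {n : ℕ} (x : Fin n → ℂ) : ℝ := ∑ i, ‖x i‖

noncomputable def l2norm {n : ℕ} (x : Fin n → ℂ) : ℝ := Real.sqrt (∑ i, ‖x i‖ ^ 2)

/-- The vector equal to `x` on `S` and zero elsewhere. -/
def restr {n : ℕ} (x : Fin n → ℂ) (S : Finset (Fin n)) : Fin n → ℂ :=
  fun i => if i ∈ S then x i else 0

/-- `x` has at most `s` nonzero entries. -/
def IsSparse {n : ℕ} (s : ℕ) (x : Fin n → ℂ) : Prop :=
  ∃ S : Finset (Fin n), S.card ≤ s ∧ ∀ i ∉ S, x i = 0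

/-- Best `s`-term approximation error of `x` in the `ℓ¹` norm. -/
noncomputable def sigma1 {n : ℕ} (s : ℕ) (x : Fin n → ℂ) : ℝ :=
  sInf {t : ℝ | ∃ z : Fin n → ℂ, IsSparse s z ∧ t = l1norm (x - z)}

/-- `η_{s,k}(λ) = (s + λ²k)/min{s, λ²k}`. -/
noncomputable def etaSK (s k : ℕ) (lam : ℝ) : ℝ :=
  ((s : ℝ) + lam ^ 2 * k) / min (s : ℝ) (lam ^ 2 * k)

/-- The ℓ¹-robust null space property of order (s,k) with weight lam, constants ρ, τ. -/
def L1RNSP {m N : ℕ} (A : Matrix (Fin m) (Fin N) ℂ) (s k : ℕ) (lam ρ τ : ℝ) : Prop :=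
  ∀ (x : Fin N → ℂ) (c : Fin m → ℂ) (S : Finset (Fin N)) (T : Finset (Fin m)),
    S.card ≤ s → T.card ≤ k →
      l1norm (restr x S) + lam * l1norm (restr c T) ≤
        ρ * (l1norm (restr x Sᶜ) + lam * l1norm (restr c Tᶜ)) + τ * l2norm (A.mulVec x + c)

/-- The ℓ²-robust null space property of order (s,k) with weight lam, constants ρ, τ. -/
def L2RNSP {m N : ℕ} (A : Matrix (Fin m) (Fin N) ℂ) (s k : ℕ) (lam ρ τ : ℝ) : Prop :=
  ∀ (x : Fin N → ℂ) (c : Fin m → ℂ) (S : Finset (Fin N)) (T : Finset (Fin m)),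
    S.card ≤ s → T.card ≤ k →
      Real.sqrt (l2norm (restr x S) ^ 2 + l2norm (restr c T) ^ 2) ≤
        (ρ / Real.sqrt ((s : ℝ) + lam ^ 2 * k)) *
            (l1norm (restr x Sᶜ) + lam * l1norm (restr c Tᶜ)) +
          τ * l2norm (A.mulVec x + c)

/-- `A` satisfies the two-sided RIP inequality for the sparse corruptions problem of
order `(s,k)` with constant `δ`. -/
def RIPCor {m N : ℕ} (A : Matrix (Fin m) (Fin N) ℂ) (s k : ℕ) (δ : ℝ) : Prop :=
  ∀ (x : Fin N → ℂ) (c : Fin m → ℂ), IsSparse s x → IsSparse k c →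
    (1 - δ) * (l2norm x ^ 2 + l2norm c ^ 2) ≤ l2norm (A.mulVec x + c) ^ 2 ∧
      l2norm (A.mulVec x + c) ^ 2 ≤ (1 + δ) * (l2norm x ^ 2 + l2norm c ^ 2)

/-- `A` satisfies the RIP inequality for sparse vectors of order `s` with constant `δ`. -/
def RIPSparse {m N : ℕ} (A : Matrix (Fin m) (Fin N) ℂ) (s : ℕ) (δ : ℝ) : Prop :=
  ∀ x : Fin N → ℂ, IsSparse s x →
    (1 - δ) * l2norm x ^ 2 ≤ l2norm (A.mulVec x) ^ 2 ∧
      l2norm (A.mulVec x) ^ 2 ≤ (1 + δ) * l2norm x ^ 2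

/-- `(xh, ch)` is a minimizer of `‖z‖₁ + lam ‖d‖₁` subject to `‖Az + d - y‖₂ ≤ ε`. -/
def IsMinimizer {m N : ℕ} (A : Matrix (Fin m) (Fin N) ℂ) (y : Fin m → ℂ) (lam ε : ℝ)
    (xh : Fin N → ℂ) (ch : Fin m → ℂ) : Prop :=
  l2norm (A.mulVec xh + ch - y) ≤ ε ∧
    ∀ (z : Fin N → ℂ) (d : Fin m → ℂ), l2norm (A.mulVec z + d - y) ≤ ε →
      l1norm xh + lam * l1norm ch ≤ l1norm z + lam * l1norm d

/-- Spectral norm of a matrix (operator norm w.r.t. Euclidean norms). -/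
noncomputable def specNorm {a b : ℕ} (B : Matrix (Fin a) (Fin b) ℂ) : ℝ :=
  ‖LinearMap.toContinuousLinearMap (Matrix.toEuclideanLin B)‖

/-- `σ_{s,k}(A)`: the maximum spectral norm over `k × s` submatrices of `A`. -/
noncomputable def sigmaSK {m N : ℕ} (A : Matrix (Fin m) (Fin N) ℂ) (s k : ℕ) : ℝ :=
  sSup {t : ℝ | ∃ (S : Finset (Fin N)) (T : Finset (Fin m)) (hS : S.card = s) (hT : T.card = k),
    t = specNorm (A.submatrix (fun i : Fin k => ((T.orderIsoOfFin hT i : Fin m)))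
      (fun j : Fin s => ((S.orderIsoOfFin hS j : Fin N))))}

theorem sq_mul_le_of_forall_sandwich {δ n₁ n₂ a b d : ℝ} (hn₁ : 0 ≤ n₁)
    (h : ∀ t : ℝ, (1 - δ) * (n₁ + t ^ 2 * n₂) ≤ a + 2 * t * b + t ^ 2 * d ∧
      a + 2 * t * b + t ^ 2 * d ≤ (1 + δ) * (n₁ + t ^ 2 * n₂)) :
    b ^ 2 * n₁ ≤ (a - (1 - δ) * n₁) * ((1 + δ) * n₁ - a) * n₂ := by
  have h₁ : b ^ 2 ≤ (a - (1 - δ) * n₁) * (d - (1 - δ) * n₂) := by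
    have := discrim_le_zero (a := d - (1 - δ) * n₂) (b := 2 * b) (c := a - (1 - δ) * n₁)
      fun t => by nlinarith [(h t).1]
    rw [discrim] at this
    nlinarith
  have h₂ : b ^ 2 ≤ ((1 + δ) * n₁ - a) * ((1 + δ) * n₂ - d) := by
    have := discrim_le_zero (a := (1 + δ) * n₂ - d) (b := -2 * b) (c := (1 + δ) * n₁ - a)
      fun t => by nlinarith [(h t).2]
    rw [discrim] at this
    nlinarith
  have hp₁ : 0 ≤ a - (1 - δ) * n₁ := by nlinarith [(h 0).1]
  have hp₂ : 0 ≤ (1 + δ) * n₁ - a := by nlinarith [(h 0).2]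
  -- the factors `pᵢ`, `qᵢ` of `h₁`, `h₂` satisfy `(q₁ + q₂) n₁ = (p₁ + p₂) n₂`,
  -- so `q₁ n₁ ≤ p₂ n₂` or `q₂ n₁ ≤ p₁ n₂`
  rcases le_total ((d - (1 - δ) * n₂) * n₁) (((1 + δ) * n₁ - a) * n₂) with hq | hq
  · nlinarith
  · nlinarith

theorem sqrt_one_sub_sq_mul_le_of_sq_mul_le {δ n β b R S : ℝ} (hδ0 : 0 ≤ δ) (hδ1 : δ < 1)
    (hn : 0 ≤ n) (hβ : 0 ≤ β) (hb : 0 ≤ b) (hS : 0 ≤ S) (hβn : (1 - δ) * n ^ 2 ≤ β ^ 2)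
    (hR : R ^ 2 ≤ (β ^ 2 - (1 - δ) * n ^ 2) * ((1 + δ) * n ^ 2 - β ^ 2))
    (h : β ^ 2 * n ≤ β * b * n + R * S) :
    √(1 - δ ^ 2) * n ≤ √(1 + δ) * b + δ * S := by
  rcases hn.eq_or_lt with rfl | hn0
  · simp only [mul_zero]
    positivity
  have hβ0 : 0 < β := by
    have : 0 < (1 - δ) * n ^ 2 := mul_pos (by linarith) (by positivity)
    nlinarith
  have hsplit : √(1 - δ ^ 2) = √(1 - δ) * √(1 + δ) := by
    rw [← Real.sqrt_mul (by linarith)]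
    ring_nf
  -- `(δ β²)² - (1 - δ²) (β² - (1 - δ) n²) ((1 + δ) n² - β²) = (β² - (1 - δ²) n²)²`
  have hRδ : R * √(1 - δ ^ 2) ≤ δ * β ^ 2 := by
    have hsq : (R * √(1 - δ ^ 2)) ^ 2 ≤ (δ * β ^ 2) ^ 2 := by
      rw [mul_pow, Real.sq_sqrt (by nlinarith)]
      nlinarith [sq_nonneg (β ^ 2 - (1 - δ ^ 2) * n ^ 2), mul_le_mul_of_nonneg_right hR
        (show 0 ≤ 1 - δ ^ 2 by nlinarith)]
    exact (abs_le_of_sq_le_sq' hsq (by positivity)).2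
  have hβ1 : √(1 - δ) * n ≤ β := by
    rw [← Real.sqrt_sq hβ, ← Real.sqrt_sq hn, ← Real.sqrt_mul (by linarith)]
    exact Real.sqrt_le_sqrt (by linarith)
  have hkey : β ^ 2 * (√(1 - δ ^ 2) * n) ≤ β ^ 2 * (√(1 + δ) * b + δ * S) := by
    have h1 := mul_le_mul_of_nonneg_right h (Real.sqrt_nonneg (1 - δ ^ 2))
    have h2 : β * b * n * √(1 - δ ^ 2) ≤ β ^ 2 * (√(1 + δ) * b) := by
      rw [hsplit]
      have := mul_le_mul_of_nonneg_left hβ1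
        (mul_nonneg (mul_nonneg hβ hb) (Real.sqrt_nonneg (1 + δ)))
      nlinarith
    nlinarith [mul_le_mul_of_nonneg_right hRδ hS]
  exact le_of_mul_le_mul_left hkey (by positivity)

theorem mul_lt_sqrt_one_sub_sq {δ X : ℝ} (hδ0 : 0 ≤ δ) (hX : 0 ≤ X)
    (hδ : δ < 1 / √(1 + X ^ 2)) : δ < 1 ∧ δ * X < √(1 - δ ^ 2) := by
  have hpos : 0 < √(1 + X ^ 2) := Real.sqrt_pos.2 (by positivity)
  have h1 : δ * √(1 + X ^ 2) < 1 := (lt_div_iff₀ hpos).1 hδ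
  have h2 : δ ^ 2 * (1 + X ^ 2) < 1 := by
    have := Real.sq_sqrt (show 0 ≤ 1 + X ^ 2 by positivity)
    nlinarith [mul_nonneg hδ0 hpos.le]
  have h3 : δ * X < √(1 - δ ^ 2) :=
    (Real.lt_sqrt (by positivity)).2 (by nlinarith)
  refine ⟨?_, h3⟩
  nlinarith [sq_nonneg X]

theorem two_mul_sqrt_two_mul_div (δ a : ℝ) :
    2 * √2 * a / (2 * √2 * √(1 - δ ^ 2) - δ) = a / (√(1 - δ ^ 2) - δ / (2 * √2)) := by
  rw [← mul_div_mul_left a _ (show 2 * √2 ≠ 0 by positivity), mul_sub,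
    mul_div_cancel₀ _ (show 2 * √2 ≠ 0 by positivity)]

theorem sqrt_sq_add_sq_le_add {a b : ℝ} (ha : 0 ≤ a) (hb : 0 ≤ b) : √(a ^ 2 + b ^ 2) ≤ a + b :=
  (Real.sqrt_le_left (add_nonneg ha hb)).2 (by nlinarith)

theorem add_le_sqrt_two_mul_sqrt_sq_add_sq (a b : ℝ) : a + b ≤ √2 * √(a ^ 2 + b ^ 2) := by
  rw [← Real.sqrt_mul zero_le_two]
  exact Real.le_sqrt_of_sq_le (by nlinarith [sq_nonneg (a - b)])

theorem norm_add_ofReal_smul_sq {𝕜 E : Type*} [RCLike 𝕜] [SeminormedAddCommGroup E]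
    [InnerProductSpace 𝕜 E] (u w : E) (t : ℝ) :
    ‖u + (t : 𝕜) • w‖ ^ 2 = ‖u‖ ^ 2 + 2 * t * RCLike.re (inner 𝕜 u w) + t ^ 2 * ‖w‖ ^ 2 := by
  rw [norm_add_sq (𝕜 := 𝕜), inner_smul_right, norm_smul, RCLike.re_ofReal_mul, RCLike.norm_ofReal,
    mul_pow, sq_abs]
  ring

theorem norm_sq_mul_le_of_forall_neg_re_inner_le {𝕜 E ι : Type*} [RCLike 𝕜]
    [SeminormedAddCommGroup E] [InnerProductSpace 𝕜 E] (u : E) {F : Finset ι} (v : ι → E)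
    {n R : ℝ} {w : ι → ℝ} (hn : 0 ≤ n) (h : ∀ j ∈ F, -(RCLike.re (inner 𝕜 u (v j)) * n) ≤ R * w j) :
    ‖u‖ ^ 2 * n ≤ ‖u‖ * ‖u + ∑ j ∈ F, v j‖ * n + R * ∑ j ∈ F, w j := by
  have hexpand : RCLike.re (inner 𝕜 u (u + ∑ j ∈ F, v j)) =
      ‖u‖ ^ 2 + ∑ j ∈ F, RCLike.re (inner 𝕜 u (v j)) := by
    rw [inner_add_right, inner_sum, map_add, map_sum, inner_self_eq_norm_sq]
  have hCS := mul_le_mul_of_nonneg_right (re_inner_le_norm (𝕜 := 𝕜) u (u + ∑ j ∈ F, v j)) hn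
  have htail := sum_le_sum h
  rw [hexpand] at hCS
  rw [mul_sum]
  simp only [sum_neg_distrib, ← sum_mul] at htail
  linarith

theorem l2norm_eq_norm {n : ℕ} (x : Fin n → ℂ) :
    l2norm x = ‖(WithLp.toLp 2 x : EuclideanSpace ℂ (Fin n))‖ := by
  simp [l2norm, EuclideanSpace.norm_eq]

theorem inner_toLp_eq_zero {n : ℕ} {x y : Fin n → ℂ} (h : ∀ i, x i = 0 ∨ y i = 0) :
    inner ℂ (WithLp.toLp 2 x : EuclideanSpace ℂ (Fin n)) (WithLp.toLp 2 y) = 0 := by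
  rw [PiLp.inner_apply]
  exact Finset.sum_eq_zero fun i _ => by rcases h i with h | h <;> simp [h]

theorem IsSparse.mono {n s s' : ℕ} {x : Fin n → ℂ} (hx : IsSparse s x) (h : s ≤ s') :
    IsSparse s' x := by
  obtain ⟨S, hS, hxS⟩ := hx
  exact ⟨S, hS.trans h, hxS⟩

theorem IsSparse.add {n s s' : ℕ} {x y : Fin n → ℂ} (hx : IsSparse s x) (hy : IsSparse s' y) :
    IsSparse (s + s') (x + y) := by
  obtain ⟨S, hS, hxS⟩ := hx
  obtain ⟨S', hS', hyS'⟩ := hy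
  refine ⟨S ∪ S', (card_union_le S S').trans (by omega), fun i hi => ?_⟩
  rw [mem_union, not_or] at hi
  simp [hxS i hi.1, hyS' i hi.2]

theorem IsSparse.smul {n s : ℕ} {x : Fin n → ℂ} (hx : IsSparse s x) (a : ℂ) :
    IsSparse s (a • x) := by
  obtain ⟨S, hS, hxS⟩ := hx
  exact ⟨S, hS, fun i hi => by simp [hxS i hi]⟩

section RIP

variable {m N s k : ℕ} {A : Matrix (Fin m) (Fin N) ℂ} {δ : ℝ}

theorem RIPCor.re_inner_sq_mul_le (hA : RIPCor A (2 * s) (2 * k) δ) {x₁ x₂ : Fin N → ℂ}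
    {c₁ c₂ : Fin m → ℂ} (hx₁ : IsSparse s x₁) (hx₂ : IsSparse s x₂) (hc₁ : IsSparse k c₁)
    (hc₂ : IsSparse k c₂) (hx : ∀ i, x₁ i = 0 ∨ x₂ i = 0) (hc : ∀ i, c₁ i = 0 ∨ c₂ i = 0) :
    (inner ℂ (WithLp.toLp 2 (A *ᵥ x₁ + c₁) : EuclideanSpace ℂ (Fin m))
        (WithLp.toLp 2 (A *ᵥ x₂ + c₂))).re ^ 2 * (l2norm x₁ ^ 2 + l2norm c₁ ^ 2) ≤
      (l2norm (A *ᵥ x₁ + c₁) ^ 2 - (1 - δ) * (l2norm x₁ ^ 2 + l2norm c₁ ^ 2)) *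
        ((1 + δ) * (l2norm x₁ ^ 2 + l2norm c₁ ^ 2) - l2norm (A *ᵥ x₁ + c₁) ^ 2) *
        (l2norm x₂ ^ 2 + l2norm c₂ ^ 2) := by
  refine sq_mul_le_of_forall_sandwich (d := l2norm (A *ᵥ x₂ + c₂) ^ 2) (by positivity) fun t => ?_
  have hAt : A *ᵥ (x₁ + (t : ℂ) • x₂) + (c₁ + (t : ℂ) • c₂) =
      A *ᵥ x₁ + c₁ + (t : ℂ) • (A *ᵥ x₂ + c₂) := by
    rw [mulVec_add, mulVec_smul, smul_add]
    abel
  have := hA _ _ (two_mul s ▸ hx₁.add (hx₂.smul (t : ℂ))) (two_mul k ▸ hc₁.add (hc₂.smul (t : ℂ)))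
  simp only [hAt, l2norm_eq_norm, WithLp.toLp_add, WithLp.toLp_smul] at this ⊢
  rw [← RCLike.ofReal_eq_complex_ofReal] at this
  simp only [norm_add_ofReal_smul_sq, inner_toLp_eq_zero hx, inner_toLp_eq_zero hc] at this ⊢
  simp only [RCLike.re_to_complex, Complex.zero_re] at this ⊢
  constructor <;> linarith [this.1, this.2]

theorem RIPCor.abs_re_inner_mul_le (hA : RIPCor A (2 * s) (2 * k) δ) {x₁ x₂ : Fin N → ℂ}
    {c₁ c₂ : Fin m → ℂ} (hx₁ : IsSparse s x₁) (hx₂ : IsSparse s x₂) (hc₁ : IsSparse k c₁)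
    (hc₂ : IsSparse k c₂) (hx : ∀ i, x₁ i = 0 ∨ x₂ i = 0) (hc : ∀ i, c₁ i = 0 ∨ c₂ i = 0) :
    |(inner ℂ (WithLp.toLp 2 (A *ᵥ x₁ + c₁) : EuclideanSpace ℂ (Fin m))
        (WithLp.toLp 2 (A *ᵥ x₂ + c₂))).re| * √(l2norm x₁ ^ 2 + l2norm c₁ ^ 2) ≤
      √((l2norm (A *ᵥ x₁ + c₁) ^ 2 - (1 - δ) * (l2norm x₁ ^ 2 + l2norm c₁ ^ 2)) *
        ((1 + δ) * (l2norm x₁ ^ 2 + l2norm c₁ ^ 2) - l2norm (A *ᵥ x₁ + c₁) ^ 2)) *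
        √(l2norm x₂ ^ 2 + l2norm c₂ ^ 2) := by
  rw [← Real.sqrt_sq_eq_abs, ← Real.sqrt_mul (sq_nonneg _), ← Real.sqrt_mul' _ (by positivity)]
  exact Real.sqrt_le_sqrt (hA.re_inner_sq_mul_le hx₁ hx₂ hc₁ hc₂ hx hc)

theorem RIPCor.sqrt_one_sub_sq_mul_le {ι : Type*} (hA : RIPCor A (2 * s) (2 * k) δ)
    (hδ0 : 0 ≤ δ) (hδ1 : δ < 1) {x₀ : Fin N → ℂ} {c₀ : Fin m → ℂ} {F : Finset ι}
    {xs : ι → Fin N → ℂ} {cs : ι → Fin m → ℂ} (hx₀ : IsSparse s x₀) (hc₀ : IsSparse k c₀)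
    (hxs : ∀ j ∈ F, IsSparse s (xs j)) (hcs : ∀ j ∈ F, IsSparse k (cs j))
    (hx : ∀ j ∈ F, ∀ i, x₀ i = 0 ∨ xs j i = 0) (hc : ∀ j ∈ F, ∀ i, c₀ i = 0 ∨ cs j i = 0) :
    √(1 - δ ^ 2) * √(l2norm x₀ ^ 2 + l2norm c₀ ^ 2) ≤
      √(1 + δ) * l2norm (A *ᵥ (x₀ + ∑ j ∈ F, xs j) + (c₀ + ∑ j ∈ F, cs j)) +
        δ * ∑ j ∈ F, √(l2norm (xs j) ^ 2 + l2norm (cs j) ^ 2) := by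
  set n := √(l2norm x₀ ^ 2 + l2norm c₀ ^ 2)
  set B : EuclideanSpace ℂ (Fin m) := WithLp.toLp 2 (A *ᵥ x₀ + c₀)
  set Bs : ι → EuclideanSpace ℂ (Fin m) := fun j => WithLp.toLp 2 (A *ᵥ xs j + cs j)
  set R := √((l2norm (A *ᵥ x₀ + c₀) ^ 2 - (1 - δ) * (l2norm x₀ ^ 2 + l2norm c₀ ^ 2)) *
    ((1 + δ) * (l2norm x₀ ^ 2 + l2norm c₀ ^ 2) - l2norm (A *ᵥ x₀ + c₀) ^ 2))
  have hn2 : n ^ 2 = l2norm x₀ ^ 2 + l2norm c₀ ^ 2 := Real.sq_sqrt (by positivity)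
  have hB : l2norm (A *ᵥ x₀ + c₀) = ‖B‖ := l2norm_eq_norm _
  have hrip := hA x₀ c₀ (hx₀.mono (by omega)) (hc₀.mono (by omega))
  have hR : R ^ 2 = (‖B‖ ^ 2 - (1 - δ) * n ^ 2) * ((1 + δ) * n ^ 2 - ‖B‖ ^ 2) := by
    rw [Real.sq_sqrt (mul_nonneg (by linarith [hrip.1]) (by linarith [hrip.2])), hB, hn2]
  have hcross : ∀ j ∈ F, -(RCLike.re (inner ℂ B (Bs j)) * n) ≤
      R * √(l2norm (xs j) ^ 2 + l2norm (cs j) ^ 2) := fun j hj =>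
    (neg_le_abs _).trans <| by
      rw [abs_mul, abs_of_nonneg (Real.sqrt_nonneg _)]
      exact hA.abs_re_inner_mul_le hx₀ (hxs j hj) hc₀ (hcs j hj) (hx j hj) (hc j hj)
  have hsum : l2norm (A *ᵥ (x₀ + ∑ j ∈ F, xs j) + (c₀ + ∑ j ∈ F, cs j)) =
      ‖B + ∑ j ∈ F, Bs j‖ := by
    rw [l2norm_eq_norm, mulVec_add, mulVec_sum, add_add_add_comm, ← sum_add_distrib,
      WithLp.toLp_add, WithLp.toLp_sum]
  rw [hsum]
  rw [hB, ← hn2] at hrip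
  exact sqrt_one_sub_sq_mul_le_of_sq_mul_le hδ0 hδ1 (Real.sqrt_nonneg _) (norm_nonneg B)
    (norm_nonneg _) (sum_nonneg fun j _ => Real.sqrt_nonneg _) hrip.1 hR.le
    (norm_sq_mul_le_of_forall_neg_re_inner_le B Bs (Real.sqrt_nonneg _) hcross)

end RIP

theorem sqrt_card_mul_sqrt_sum_sq_le {ι : Type*} (I : Finset ι) (f : ι → ℝ) {lo hi : ℝ}
    (hlo : 0 ≤ lo) (hlohi : lo ≤ hi) (hf : ∀ i ∈ I, lo ≤ f i ∧ f i ≤ hi) :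
    √(#I : ℝ) * √(∑ i ∈ I, f i ^ 2) ≤ ∑ i ∈ I, f i + #I * (hi - lo) / 4 := by
  have hquad : ∑ i ∈ I, f i ^ 2 ≤ (hi + lo) * ∑ i ∈ I, f i - #I * (hi * lo) := by
    rw [mul_sum, ← nsmul_eq_mul, ← sum_const, ← sum_sub_distrib]
    exact sum_le_sum fun i hi' => by nlinarith [hf i hi']
  have hL : 0 ≤ ∑ i ∈ I, f i := sum_nonneg fun i hi' => hlo.trans (hf i hi').1
  rw [← Real.sqrt_mul (by positivity), Real.sqrt_le_left (by positivity)]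
  -- the difference of the two sides is `(L - s (hi + 3 lo)/4)² + s² lo (hi - lo)/2`
  nlinarith [sq_nonneg (∑ i ∈ I, f i - #I * (hi + 3 * lo) / 4),
    mul_nonneg (mul_nonneg (sq_nonneg (#I : ℝ)) hlo) (sub_nonneg.2 hlohi)]

theorem card_mul_le_sqrt_card_mul_sqrt_sum_sq {ι : Type*} (I : Finset ι) (f : ι → ℝ) {c : ℝ}
    (hc : 0 ≤ c) (hf : ∀ i ∈ I, c ≤ f i) : #I * c ≤ √(#I : ℝ) * √(∑ i ∈ I, f i ^ 2) := by
  rw [← Real.sqrt_mul (by positivity)]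
  refine Real.le_sqrt_of_sq_le ?_
  have := card_nsmul_le_sum I (fun i => f i ^ 2) (c ^ 2) fun i hi => pow_le_pow_left₀ hc (hf i hi) 2
  rw [nsmul_eq_mul] at this
  nlinarith [mul_le_mul_of_nonneg_left this (Nat.cast_nonneg (α := ℝ) #I)]

theorem sum_Ico_mul_sum_Ico {M : Type*} [AddCommMonoid M] (f : ℕ → M) (p : ℕ) {a b : ℕ}
    (hab : a ≤ b) :
    ∑ j ∈ Ico a b, ∑ t ∈ Ico (p * j) (p * j + p), f t = ∑ t ∈ Ico (p * a) (p * b), f t := by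
  induction b, hab using Nat.le_induction with
  | base => simp
  | succ b hab ih =>
    rw [sum_Ico_succ_top hab, ih, mul_add_one,
      sum_Ico_consecutive _ (Nat.mul_le_mul_left p hab) le_self_add]

theorem sum_sqrt_sum_sq_Ico_le {G : ℕ → ℝ} (hG : Antitone G) (hG0 : ∀ t, 0 ≤ G t) {p : ℕ}
    (hp : 0 < p) (J : ℕ) :
    ∑ j ∈ Ico 1 J, √(∑ t ∈ Ico (p * j) (p * j + p), G t ^ 2) ≤
      (∑ t ∈ Ico p (p * J), G t) / √p + √(∑ t ∈ range p, G t ^ 2) / 4 := by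
  rcases Nat.eq_zero_or_pos J with rfl | hJ
  · simp only [Ico_eq_empty_of_le, zero_le, mul_zero, sum_empty, zero_div, zero_add]
    positivity
  replace hJ : 1 ≤ J := hJ
  have hsp : 0 < √(p : ℝ) := Real.sqrt_pos.2 (by exact_mod_cast hp)
  have hblock : ∀ j, √(p : ℝ) * √(∑ t ∈ Ico (p * j) (p * j + p), G t ^ 2) ≤
      ∑ t ∈ Ico (p * j) (p * j + p), G t + p * (G (p * j) - G (p * (j + 1))) / 4 := by
    intro j
    have := sqrt_card_mul_sqrt_sum_sq_le (Ico (p * j) (p * j + p)) G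
      (lo := G (p * (j + 1))) (hi := G (p * j)) (hG0 _) (hG (Nat.mul_le_mul_left p j.le_succ))
      fun t ht => by
        rw [mem_Ico] at ht
        exact ⟨hG (by rw [mul_add_one]; omega), hG ht.1⟩
    simpa using this
  have htel : ∑ j ∈ Ico 1 J, (G (p * j) - G (p * (j + 1))) = G p - G (p * J) := by
    induction J, hJ using Nat.le_induction with
    | base => simp
    | succ J hJ ih => rw [sum_Ico_succ_top hJ, ih]; ring
  have hsum : √(p : ℝ) * ∑ j ∈ Ico 1 J, √(∑ t ∈ Ico (p * j) (p * j + p), G t ^ 2) ≤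
      ∑ t ∈ Ico p (p * J), G t + p * (G p - G (p * J)) / 4 := by
    calc √(p : ℝ) * ∑ j ∈ Ico 1 J, √(∑ t ∈ Ico (p * j) (p * j + p), G t ^ 2)
        ≤ ∑ j ∈ Ico 1 J, (∑ t ∈ Ico (p * j) (p * j + p), G t +
            p * (G (p * j) - G (p * (j + 1))) / 4) := by
          rw [mul_sum]
          exact sum_le_sum fun j _ => hblock j
      _ = ∑ t ∈ Ico p (p * J), G t + p * (G p - G (p * J)) / 4 := by
          rw [sum_add_distrib, sum_Ico_mul_sum_Ico G p hJ, mul_one, ← sum_div, ← mul_sum, htel]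
  have hhead := card_mul_le_sqrt_card_mul_sqrt_sum_sq (range p) G (hG0 p)
    fun t ht => hG (mem_range.1 ht).le
  rw [card_range] at hhead
  rw [div_add' _ _ _ hsp.ne', le_div_iff₀ hsp]
  nlinarith [mul_nonneg p.cast_nonneg (hG0 (p * J))]

theorem sum_le_sum_range_of_antitone {h : ℕ → ℝ} (hh : Antitone h) (h0 : ∀ t, 0 ≤ h t)
    {T : Finset ℕ} {p : ℕ} (hT : #T ≤ p) : ∑ t ∈ T, h t ≤ ∑ t ∈ range p, h t := by
  -- the terms of `T` beyond `p` are at most `h p`, the missing terms below `p` at least `h p`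
  have hcard : #(T \ range p) ≤ #(range p \ T) := by
    have h₁ := card_inter_add_card_sdiff T (range p)
    have h₂ := card_inter_add_card_sdiff (range p) T
    rw [card_range, inter_comm] at h₂
    omega
  have hout : ∑ t ∈ T \ range p, h t ≤ #(T \ range p) • h p :=
    sum_le_card_nsmul _ _ _ fun t ht => hh (by simpa using (mem_sdiff.1 ht).2)
  have hin : #(range p \ T) • h p ≤ ∑ t ∈ range p \ T, h t :=
    card_nsmul_le_sum _ _ _ fun t ht => hh (mem_range.1 (mem_sdiff.1 ht).1).le
  rw [← sum_inter_add_sum_sdiff T (range p), ← sum_inter_add_sum_sdiff (range p) T, inter_comm]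
  linarith [nsmul_le_nsmul_left (h0 p) hcard]

section Restriction

variable {n : ℕ}

theorem l1norm_restr (y : Fin n → ℂ) (S : Finset (Fin n)) :
    l1norm (restr y S) = ∑ i ∈ S, ‖y i‖ := by
  simp [l1norm, restr, apply_ite, sum_ite_mem]

theorem l2norm_restr (y : Fin n → ℂ) (S : Finset (Fin n)) :
    l2norm (restr y S) = √(∑ i ∈ S, ‖y i‖ ^ 2) := by
  simp [l2norm, restr, apply_ite, sum_ite_mem]

theorem l2norm_nonneg (y : Fin n → ℂ) : 0 ≤ l2norm y := Real.sqrt_nonneg _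

theorem l1norm_nonneg (y : Fin n → ℂ) : 0 ≤ l1norm y := sum_nonneg fun _ _ => norm_nonneg _

theorem isSparse_restr {s : ℕ} (y : Fin n → ℂ) {S : Finset (Fin n)} (hS : #S ≤ s) :
    IsSparse s (restr y S) :=
  ⟨S, hS, fun _ hi => if_neg hi⟩

theorem restr_eq_zero_or_restr_eq_zero (y : Fin n → ℂ) {S S' : Finset (Fin n)}
    (h : Disjoint S S') (i : Fin n) : restr y S i = 0 ∨ restr y S' i = 0 := by
  by_cases hi : i ∈ S
  · exact .inr (if_neg (disjoint_left.1 h hi))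
  · exact .inl (if_neg hi)

end Restriction

section Rearrangement

variable {n : ℕ}

/-- Position of `i` when the coordinates of `y` are listed by nonincreasing modulus. -/
noncomputable def normRank (y : Fin n → ℂ) (i : Fin n) : ℕ := (Tuple.sort fun i => -‖y i‖).symm i

noncomputable def decreasingRearrangement (y : Fin n → ℂ) (t : ℕ) : ℝ :=
  if h : t < n then ‖y (Tuple.sort (fun i => -‖y i‖) ⟨t, h⟩)‖ else 0

/-- The blocks `S₀, S₁, …` of the proof: `S₀` holds `p` largest coordinates of `y` in modulus,
`S₁` the next `p`, and so on. -/
noncomputable def normBlock (y : Fin n → ℂ) (p j : ℕ) : Finset (Fin n) :=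
  univ.filter fun i => normRank y i / p = j

variable (y : Fin n → ℂ)

theorem normRank_lt (i : Fin n) : normRank y i < n := Fin.is_lt _

theorem normRank_injective : Function.Injective (normRank y) :=
  fun _ _ h => (Tuple.sort _).symm.injective (Fin.ext h)

theorem decreasingRearrangement_normRank (i : Fin n) :
    decreasingRearrangement y (normRank y i) = ‖y i‖ := by
  simp [decreasingRearrangement, normRank]

theorem decreasingRearrangement_nonneg (t : ℕ) : 0 ≤ decreasingRearrangement y t := by
  unfold decreasingRearrangement
  split <;> positivity

theorem antitone_decreasingRearrangement : Antitone (decreasingRearrangement y) := by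
  intro a b hab
  by_cases hb : b < n
  · have hmono := Tuple.monotone_sort (fun i => -‖y i‖)
      (show (⟨a, hab.trans_lt hb⟩ : Fin n) ≤ ⟨b, hb⟩ from hab)
    simp only [Function.comp_apply, neg_le_neg_iff] at hmono
    simpa [decreasingRearrangement, hb, hab.trans_lt hb] using hmono
  · simpa [decreasingRearrangement, hb] using decreasingRearrangement_nonneg y a

theorem sum_image_normRank (S : Finset (Fin n)) (F : ℝ → ℝ) :
    ∑ t ∈ S.image (normRank y), F (decreasingRearrangement y t) = ∑ i ∈ S, F ‖y i‖ := by
  rw [sum_image fun i _ j _ h => normRank_injective y h]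
  simp only [decreasingRearrangement_normRank]

theorem sum_filter_normRank_mem (U : Finset ℕ) {F : ℝ → ℝ} (hF : F 0 = 0) :
    ∑ i with normRank y i ∈ U, F ‖y i‖ = ∑ t ∈ U, F (decreasingRearrangement y t) := by
  rw [← sum_image_normRank]
  refine sum_subset (fun t ht => ?_) fun t htU ht => ?_
  · obtain ⟨i, hi, rfl⟩ := mem_image.1 ht
    exact (mem_filter.1 hi).2
  · have htn : ¬t < n := fun htn => ht <| mem_image.2
      ⟨Tuple.sort (fun i => -‖y i‖) ⟨t, htn⟩,
        mem_filter.2 ⟨mem_univ _, by simpa [normRank] using htU⟩, by simp [normRank]⟩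
    simp [decreasingRearrangement, htn, hF]

theorem normBlock_eq_filter {p : ℕ} (hp : 0 < p) (j : ℕ) :
    normBlock y p j = univ.filter fun i => normRank y i ∈ Ico (p * j) (p * j + p) := by
  ext i
  simp only [normBlock, mem_filter, mem_univ, true_and, mem_Ico, Nat.div_eq_iff hp, mul_comm j p]
  omega

theorem card_normBlock_le {p : ℕ} (hp : 0 < p) (j : ℕ) : #(normBlock y p j) ≤ p := by
  have := card_le_card_of_injOn (normRank y) (s := normBlock y p j) (t := Ico (p * j) (p * j + p))
    (fun i hi => by rw [normBlock_eq_filter y hp] at hi; simpa using hi)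
    (normRank_injective y).injOn
  simpa using this

theorem disjoint_normBlock (p : ℕ) {j j' : ℕ} (h : j ≠ j') :
    Disjoint (normBlock y p j) (normBlock y p j') :=
  disjoint_filter.2 fun _ _ h₁ h₂ => h (h₁.symm.trans h₂)

theorem sum_range_restr_normBlock (p : ℕ) {J : ℕ} (hJ : n ≤ J) :
    ∑ j ∈ range J, restr y (normBlock y p j) = y := by
  ext i
  have hi : normRank y i / p < J := (Nat.div_le_self _ _).trans_lt ((normRank_lt y i).trans_le hJ)
  simp [restr, normBlock, Finset.sum_apply, hi]

theorem sum_normBlock {p : ℕ} (hp : 0 < p) (j : ℕ) {F : ℝ → ℝ} (hF : F 0 = 0) :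
    ∑ i ∈ normBlock y p j, F ‖y i‖ =
      ∑ t ∈ Ico (p * j) (p * j + p), F (decreasingRearrangement y t) := by
  rw [normBlock_eq_filter y hp, sum_filter_normRank_mem y _ hF]

theorem sum_le_sum_normBlock_zero {p : ℕ} (hp : 0 < p) {F : ℝ → ℝ} (hF0 : F 0 = 0)
    (hF : MonotoneOn F (Set.Ici 0)) {S : Finset (Fin n)} (hS : #S ≤ p) :
    ∑ i ∈ S, F ‖y i‖ ≤ ∑ i ∈ normBlock y p 0, F ‖y i‖ := by
  have hG := decreasingRearrangement_nonneg y
  rw [← sum_image_normRank, sum_normBlock y hp 0 hF0, mul_zero, zero_add, ← range_eq_Ico]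
  exact sum_le_sum_range_of_antitone
    (fun a b hab => hF (hG b) (hG a) (antitone_decreasingRearrangement y hab))
    (fun t => hF0 ▸ hF Set.self_mem_Ici (hG t) (hG t)) (card_image_le.trans hS)

theorem l2norm_restr_le_normBlock_zero {p : ℕ} (hp : 0 < p) {S : Finset (Fin n)}
    (hS : #S ≤ p) : l2norm (restr y S) ≤ l2norm (restr y (normBlock y p 0)) := by
  rw [l2norm_restr, l2norm_restr]
  exact Real.sqrt_le_sqrt
    (sum_le_sum_normBlock_zero y hp (F := (· ^ 2)) (zero_pow two_ne_zero) pow_left_monotoneOn hS)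

theorem l1norm_restr_compl_normBlock_zero_le {p : ℕ} (hp : 0 < p) {S : Finset (Fin n)}
    (hS : #S ≤ p) : l1norm (restr y (normBlock y p 0)ᶜ) ≤ l1norm (restr y Sᶜ) := by
  have h := sum_le_sum_normBlock_zero y hp (F := id) rfl monotoneOn_id hS
  have hS' := sum_add_sum_compl S fun i => ‖y i‖
  have h₀ := sum_add_sum_compl (normBlock y p 0) fun i => ‖y i‖
  rw [l1norm_restr, l1norm_restr]
  simp only [id] at h
  linarith

theorem sum_l2norm_restr_normBlock_le {p : ℕ} (hp : 0 < p) (J : ℕ) :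
    ∑ j ∈ Ico 1 J, l2norm (restr y (normBlock y p j)) ≤
      l1norm (restr y (normBlock y p 0)ᶜ) / √p + l2norm (restr y (normBlock y p 0)) / 4 := by
  have hl2 : ∀ j, l2norm (restr y (normBlock y p j)) =
      √(∑ t ∈ Ico (p * j) (p * j + p), decreasingRearrangement y t ^ 2) := fun j => by
    rw [l2norm_restr, sum_normBlock y hp j (F := (· ^ 2)) (zero_pow two_ne_zero)]
  have hl1 : ∑ t ∈ Ico p (p * J), decreasingRearrangement y t ≤
      l1norm (restr y (normBlock y p 0)ᶜ) := by
    have := sum_filter_normRank_mem y (Ico p (p * J)) (F := id) rfl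
    simp only [id] at this
    rw [l1norm_restr, ← this]
    refine sum_le_sum_of_subset_of_nonneg (fun i hi => ?_) fun _ _ _ => norm_nonneg _
    simp only [mem_filter, mem_univ, true_and, mem_Ico] at hi
    simp [normBlock, Nat.div_eq_zero_iff_lt hp, hi.1]
  simp_rw [hl2]
  calc _ ≤ (∑ t ∈ Ico p (p * J), decreasingRearrangement y t) / √p +
        √(∑ t ∈ range p, decreasingRearrangement y t ^ 2) / 4 :=
      sum_sqrt_sum_sq_Ico_le (antitone_decreasingRearrangement y)
        (decreasingRearrangement_nonneg y) hp J
    _ ≤ _ := by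
      rw [mul_zero, zero_add, ← range_eq_Ico]
      gcongr

end Rearrangement

theorem sum_sqrt_l2norm_sq_normBlock_le {m N s k : ℕ} (x : Fin N → ℂ) (c : Fin m → ℂ)
    (hs : 0 < s) (hk : 0 < k) {lam μ : ℝ} (hμ : 0 < μ) (hμs : μ ≤ √s) (hμk : μ ≤ lam * √k)
    (J : ℕ) :
    ∑ j ∈ Ico 1 J,
        √(l2norm (restr x (normBlock x s j)) ^ 2 + l2norm (restr c (normBlock c k j)) ^ 2) ≤
      (l1norm (restr x (normBlock x s 0)ᶜ) + lam * l1norm (restr c (normBlock c k 0)ᶜ)) / μ +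
        √(l2norm (restr x (normBlock x s 0)) ^ 2 + l2norm (restr c (normBlock c k 0)) ^ 2) /
          (2 * √2) := by
  have hsplit := sum_le_sum fun j (_ : j ∈ Ico 1 J) => sqrt_sq_add_sq_le_add
    (l2norm_nonneg (restr x (normBlock x s j))) (l2norm_nonneg (restr c (normBlock c k j)))
  rw [sum_add_distrib] at hsplit
  have hx := sum_l2norm_restr_normBlock_le x hs J
  have hc := sum_l2norm_restr_normBlock_le c hk J
  have hx₁ : l1norm (restr x (normBlock x s 0)ᶜ) / √s ≤ l1norm (restr x (normBlock x s 0)ᶜ) / μ :=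
    div_le_div_of_nonneg_left (l1norm_nonneg _) hμ hμs
  have hc₁ : l1norm (restr c (normBlock c k 0)ᶜ) / √k ≤
      lam * l1norm (restr c (normBlock c k 0)ᶜ) / μ := by
    have hk' : 0 < √(k : ℝ) := Real.sqrt_pos.2 (by exact_mod_cast hk)
    rw [div_le_div_iff₀ hk' hμ]
    nlinarith [l1norm_nonneg (restr c (normBlock c k 0)ᶜ)]
  have h₀ := add_le_sqrt_two_mul_sqrt_sq_add_sq (l2norm (restr x (normBlock x s 0)))
    (l2norm (restr c (normBlock c k 0)))
  have h2 : √2 / 4 = 1 / (2 * √2) := by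
    field_simp
    rw [Real.sq_sqrt zero_le_two]
    norm_num
  rw [add_div, div_eq_mul_one_div _ (2 * √2), ← h2]
  linarith

theorem RIPCor.normBlock_head_le {m N s k : ℕ} {A : Matrix (Fin m) (Fin N) ℂ} {δ : ℝ}
    (hA : RIPCor A (2 * s) (2 * k) δ) (hδ0 : 0 ≤ δ) (hδ1 : δ < 1) (hs : 0 < s) (hk : 0 < k)
    {lam μ : ℝ} (hμ : 0 < μ) (hμs : μ ≤ √s) (hμk : μ ≤ lam * √k)
    (x : Fin N → ℂ) (c : Fin m → ℂ) :
    (√(1 - δ ^ 2) - δ / (2 * √2)) *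
        √(l2norm (restr x (normBlock x s 0)) ^ 2 + l2norm (restr c (normBlock c k 0)) ^ 2) ≤
      √(1 + δ) * l2norm (A *ᵥ x + c) + δ / μ *
        (l1norm (restr x (normBlock x s 0)ᶜ) + lam * l1norm (restr c (normBlock c k 0)ᶜ)) := by
  set J := N + m + 1
  have hx : restr x (normBlock x s 0) + ∑ j ∈ Ico 1 J, restr x (normBlock x s j) = x := by
    rw [← sum_range_eq_add_Ico (fun j => restr x (normBlock x s j)) (by omega)]
    exact sum_range_restr_normBlock x s (by omega)
  have hc : restr c (normBlock c k 0) + ∑ j ∈ Ico 1 J, restr c (normBlock c k j) = c := by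
    rw [← sum_range_eq_add_Ico (fun j => restr c (normBlock c k j)) (by omega)]
    exact sum_range_restr_normBlock c k (by omega)
  have hhead := hA.sqrt_one_sub_sq_mul_le hδ0 hδ1 (F := Ico 1 J)
    (isSparse_restr x (card_normBlock_le x hs 0)) (isSparse_restr c (card_normBlock_le c hk 0))
    (fun j _ => isSparse_restr x (card_normBlock_le x hs j))
    (fun j _ => isSparse_restr c (card_normBlock_le c hk j))
    (fun j hj => restr_eq_zero_or_restr_eq_zero x
      (disjoint_normBlock x s (by have := (mem_Ico.1 hj).1; omega)))
    (fun j hj => restr_eq_zero_or_restr_eq_zero c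
      (disjoint_normBlock c k (by have := (mem_Ico.1 hj).1; omega)))
  rw [hx, hc] at hhead
  have htail := mul_le_mul_of_nonneg_left
    (sum_sqrt_l2norm_sq_normBlock_le x c hs hk hμ hμs hμk J) hδ0
  linear_combination hhead + htail

theorem RIPCor.l2RNSP {m N s k : ℕ} {A : Matrix (Fin m) (Fin N) ℂ} {δ : ℝ}
    (hA : RIPCor A (2 * s) (2 * k) δ) (hδ0 : 0 ≤ δ) (hδ1 : δ < 1) (hs : 0 < s) (hk : 0 < k)
    {lam : ℝ} (hlam : 0 < lam) (hD : 0 < √(1 - δ ^ 2) - δ / (2 * √2)) :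
    L2RNSP A s k lam (δ * √(etaSK s k lam) / (√(1 - δ ^ 2) - δ / (2 * √2)))
      (√(1 + δ) / (√(1 - δ ^ 2) - δ / (2 * √2))) := by
  intro x c S T hS hT
  set μ := √(min (s : ℝ) (lam ^ 2 * k))
  have hμ : 0 < μ := Real.sqrt_pos.2 (lt_min (by exact_mod_cast hs) (by positivity))
  have hμk : μ ≤ lam * √k := by
    rw [← Real.sqrt_sq hlam.le, ← Real.sqrt_mul (sq_nonneg _)]
    exact Real.sqrt_le_sqrt (min_le_right _ _)
  have hη : √(etaSK s k lam) = √((s : ℝ) + lam ^ 2 * k) / μ :=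
    Real.sqrt_div' _ (le_min (by positivity) (by positivity))
  have hhead := hA.normBlock_head_le hδ0 hδ1 hs hk hμ (Real.sqrt_le_sqrt (min_le_left _ _)) hμk x c
  have hl2 := add_le_add
    (pow_le_pow_left₀ (l2norm_nonneg _) (l2norm_restr_le_normBlock_zero x hs hS) 2)
    (pow_le_pow_left₀ (l2norm_nonneg _) (l2norm_restr_le_normBlock_zero c hk hT) 2)
  have hl1 := add_le_add (l1norm_restr_compl_normBlock_zero_le x hs hS)
    (mul_le_mul_of_nonneg_left (l1norm_restr_compl_normBlock_zero_le c hk hT) hlam.le)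
  calc √(l2norm (restr x S) ^ 2 + l2norm (restr c T) ^ 2)
      ≤ √(l2norm (restr x (normBlock x s 0)) ^ 2 + l2norm (restr c (normBlock c k 0)) ^ 2) :=
        Real.sqrt_le_sqrt hl2
    _ ≤ (√(1 + δ) * l2norm (A *ᵥ x + c) + δ / μ *
          (l1norm (restr x (normBlock x s 0)ᶜ) + lam * l1norm (restr c (normBlock c k 0)ᶜ))) /
          (√(1 - δ ^ 2) - δ / (2 * √2)) :=
        (le_div_iff₀ hD).2 (by linarith)
    _ ≤ (√(1 + δ) * l2norm (A *ᵥ x + c) + δ / μ *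
          (l1norm (restr x Sᶜ) + lam * l1norm (restr c Tᶜ))) / (√(1 - δ ^ 2) - δ / (2 * √2)) := by
        gcongr
    _ = _ := by
        rw [hη]
        field_simp
        ring

theorem rip_implies_l2RNSP_general {N m : ℕ} (s k : ℕ)
    (hs1 : 1 ≤ s) (hk1 : 1 ≤ k)
    (lam : ℝ) (hlam : 0 < lam)
    (A : Matrix (Fin m) (Fin N) ℂ) (δ : ℝ) (hδ0 : 0 < δ)
    (hRIP : RIPCor A (2 * s) (2 * k) δ)
    (hδ : δ < 1 / Real.sqrt (1 + (1 / (2 * Real.sqrt 2) + Real.sqrt (etaSK s k lam)) ^ 2)) :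
    0 < 2 * Real.sqrt 2 * δ * Real.sqrt (etaSK s k lam) /
        (2 * Real.sqrt 2 * Real.sqrt (1 - δ ^ 2) - δ) ∧
    2 * Real.sqrt 2 * δ * Real.sqrt (etaSK s k lam) /
        (2 * Real.sqrt 2 * Real.sqrt (1 - δ ^ 2) - δ) < 1 ∧
    0 < 2 * Real.sqrt 2 * Real.sqrt (1 + δ) /
        (2 * Real.sqrt 2 * Real.sqrt (1 - δ ^ 2) - δ) ∧
    L2RNSP A s k lam
      (2 * Real.sqrt 2 * δ * Real.sqrt (etaSK s k lam) /
        (2 * Real.sqrt 2 * Real.sqrt (1 - δ ^ 2) - δ))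
      (2 * Real.sqrt 2 * Real.sqrt (1 + δ) /
        (2 * Real.sqrt 2 * Real.sqrt (1 - δ ^ 2) - δ)) := by
  obtain ⟨hδ1, hδη⟩ := mul_lt_sqrt_one_sub_sq hδ0.le (by positivity) hδ
  have hη : 0 < √(etaSK s k lam) := Real.sqrt_pos.2 <| div_pos (by positivity)
    (lt_min (by exact_mod_cast hs1) (by positivity))
  have hD : δ * √(etaSK s k lam) < √(1 - δ ^ 2) - δ / (2 * √2) := by
    linarith [show δ * (1 / (2 * √2) + √(etaSK s k lam)) = δ / (2 * √2) + δ * √(etaSK s k lam)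
      by ring]
  have hD0 : 0 < √(1 - δ ^ 2) - δ / (2 * √2) := lt_of_le_of_lt (by positivity) hD
  rw [mul_assoc _ δ, two_mul_sqrt_two_mul_div, two_mul_sqrt_two_mul_div]
  exact ⟨by positivity, (div_lt_one hD0).2 hD, by positivity,
    hRIP.l2RNSP hδ0.le hδ1 hs1 hk1 hlam hD0⟩

/-- the RIP for the sparse corruptions problem of order (2s,2k) implies
the ℓ²-robust NSP of order (s,k), with explicit constants ρ and τ satisfying
0 < ρ < 1 and τ > 0. -/
theorem rip_implies_l2RNSP {N m : ℕ} (s k : ℕ)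
    (hs1 : 1 ≤ s) (hsN : s ≤ N) (hk1 : 1 ≤ k) (hkm : k ≤ m) (hmN : m ≤ N)
    (lam : ℝ) (hlam : 0 < lam)
    (A : Matrix (Fin m) (Fin N) ℂ) (δ : ℝ) (hδ0 : 0 < δ)
    (hRIP : RIPCor A (2 * s) (2 * k) δ)
    (hδ : δ < 1 / Real.sqrt (1 + (1 / (2 * Real.sqrt 2) + Real.sqrt (etaSK s k lam)) ^ 2)) :
    0 < 2 * Real.sqrt 2 * δ * Real.sqrt (etaSK s k lam) /
        (2 * Real.sqrt 2 * Real.sqrt (1 - δ ^ 2) - δ) ∧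
    2 * Real.sqrt 2 * δ * Real.sqrt (etaSK s k lam) /
        (2 * Real.sqrt 2 * Real.sqrt (1 - δ ^ 2) - δ) < 1 ∧
    0 < 2 * Real.sqrt 2 * Real.sqrt (1 + δ) /
        (2 * Real.sqrt 2 * Real.sqrt (1 - δ ^ 2) - δ) ∧
    L2RNSP A s k lam
      (2 * Real.sqrt 2 * δ * Real.sqrt (etaSK s k lam) /
        (2 * Real.sqrt 2 * Real.sqrt (1 - δ ^ 2) - δ))
      (2 * Real.sqrt 2 * Real.sqrt (1 + δ) /
        (2 * Real.sqrt 2 * Real.sqrt (1 - δ ^ 2) - δ)) :=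
  rip_implies_l2RNSP_general s k hs1 hk1 lam hlam A δ hδ0 hRIP hδ
end

section
/- Let 1 ≤ s ≤ N, 1 ≤ k ≤ m and λ > 0, and suppose A ∈ ℂ^{m×N} satisfies the ℓ¹-robust null space property of order (s,k) with weight λ and constants ρ ∈ (0,1) and τ' > 0. Let x ∈ ℂ^N, c ∈ ℂ^m, y ∈ ℂ^m, ε > 0 satisfy ‖Ax + c − y‖₂ ≤ ε, let (x̂, ĉ) be a minimizer of ‖z‖₁ + λ‖d‖₁ subject to ‖Az + d − y‖₂ ≤ ε, and set v = x − x̂, e = c − ĉ. Then for any sets S ⊆ {1,…,N} with |S| ≤ s, T ⊆ {1,…,m} with |T| ≤ k, one has ‖v_{S^c}‖₁ + λ‖e_{T^c}‖₁ ≤ (2/(1−ρ))·(‖x_{S^c}‖₁ + λ‖c_{T^c}‖₁) + (2τ'/(1−ρ))·ε. -/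
open Finset Matrix MeasureTheory

/-! Minimality of `(xh, ch)` against the feasible pair `(x, c)` forces the error
`(v, e) = (x - xh, c - ch)` into a cone: its weighted tail is at most its weighted head plus
twice the weighted tail of `(x, c)`. Both pairs are feasible, so `‖Av + e‖₂ ≤ 2ε`, and the null
space property bounds the head by `ρ · tail + 2τ'ε`; solving the two inequalities for the tail
gives the bound. -/

section Norms

variable {n : ℕ}

lemma l1norm_eq_norm_toLp (x : Fin n → ℂ) : l1norm x = ‖WithLp.toLp 1 x‖ :=
  (PiLp.norm_eq_of_L1 _).symm

lemma l2norm_eq_norm_toLp (x : Fin n → ℂ) : l2norm x = ‖WithLp.toLp 2 x‖ :=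
  (EuclideanSpace.norm_eq _).symm

lemma l1norm_sub_le (a b : Fin n → ℂ) : l1norm (a - b) ≤ l1norm a + l1norm b := by
  simpa only [l1norm_eq_norm_toLp, WithLp.toLp_sub] using norm_sub_le _ _

lemma l1norm_sub_l1norm_le (a b : Fin n → ℂ) : l1norm a - l1norm b ≤ l1norm (a - b) := by
  simpa only [l1norm_eq_norm_toLp, WithLp.toLp_sub] using norm_sub_norm_le _ _

lemma l2norm_sub_le (a b : Fin n → ℂ) : l2norm (a - b) ≤ l2norm a + l2norm b := by
  simpa only [l2norm_eq_norm_toLp, WithLp.toLp_sub] using norm_sub_le _ _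

lemma restr_sub (a b : Fin n → ℂ) (S : Finset (Fin n)) :
    restr (a - b) S = restr a S - restr b S := by
  funext i
  by_cases hi : i ∈ S <;> simp [restr, hi]

lemma l1norm_restr_add_l1norm_restr_compl (x : Fin n → ℂ) (S : Finset (Fin n)) :
    l1norm (restr x S) + l1norm (restr x Sᶜ) = l1norm x := by
  simp only [l1norm, restr, ← Finset.sum_add_distrib]
  refine Finset.sum_congr rfl fun i _ => ?_
  by_cases hi : i ∈ S <;> simp [hi]

lemma l1norm_restr_compl_sub_le (x z : Fin n → ℂ) (S : Finset (Fin n)) :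
    l1norm (restr (x - z) Sᶜ) ≤
      l1norm z - l1norm x + l1norm (restr (x - z) S) + 2 * l1norm (restr x Sᶜ) := by
  have head := l1norm_sub_l1norm_le (restr x S) (restr z S)
  have tail := l1norm_sub_le (restr x Sᶜ) (restr z Sᶜ)
  rw [← restr_sub] at head tail
  linarith [l1norm_restr_add_l1norm_restr_compl x S, l1norm_restr_add_l1norm_restr_compl z S]

end Norms

section Recovery

variable {m N : ℕ}

lemma weighted_tail_le_of_l1_le {lam : ℝ} (hlam : 0 ≤ lam) {x z : Fin N → ℂ} {c d : Fin m → ℂ}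
    (hle : l1norm z + lam * l1norm d ≤ l1norm x + lam * l1norm c)
    (S : Finset (Fin N)) (T : Finset (Fin m)) :
    l1norm (restr (x - z) Sᶜ) + lam * l1norm (restr (c - d) Tᶜ) ≤
      l1norm (restr (x - z) S) + lam * l1norm (restr (c - d) T) +
        2 * (l1norm (restr x Sᶜ) + lam * l1norm (restr c Tᶜ)) := by
  have hx := l1norm_restr_compl_sub_le x z S
  have hc := mul_le_mul_of_nonneg_left (l1norm_restr_compl_sub_le c d T) hlam
  linarith

lemma l2norm_mulVec_sub_add_sub_le (A : Matrix (Fin m) (Fin N) ℂ) (x x' : Fin N → ℂ)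
    (c c' y : Fin m → ℂ) :
    l2norm (A *ᵥ (x - x') + (c - c')) ≤ l2norm (A *ᵥ x + c - y) + l2norm (A *ᵥ x' + c' - y) := by
  have hdiff : A *ᵥ (x - x') + (c - c') = (A *ᵥ x + c - y) - (A *ᵥ x' + c' - y) := by
    rw [Matrix.mulVec_sub]
    abel
  rw [hdiff]
  exact l2norm_sub_le _ _

end Recovery

theorem tail_bound_of_l1RNSP_general {N m : ℕ} (s k : ℕ)
    (lam : ℝ) (hlam : 0 < lam)
    (A : Matrix (Fin m) (Fin N) ℂ) (ρ τ' : ℝ) (hρ1 : ρ < 1) (hτ : 0 < τ')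
    (h : L1RNSP A s k lam ρ τ')
    (x : Fin N → ℂ) (c y : Fin m → ℂ) (ε : ℝ)
    (hfeas : l2norm (A.mulVec x + c - y) ≤ ε)
    (xh : Fin N → ℂ) (ch : Fin m → ℂ) (hmin : IsMinimizer A y lam ε xh ch)
    (S : Finset (Fin N)) (T : Finset (Fin m)) (hS : S.card ≤ s) (hT : T.card ≤ k) :
    l1norm (restr (x - xh) Sᶜ) + lam * l1norm (restr (c - ch) Tᶜ) ≤
      (2 / (1 - ρ)) * (l1norm (restr x Sᶜ) + lam * l1norm (restr c Tᶜ)) +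
        (2 * τ' / (1 - ρ)) * ε := by
  have hcone := weighted_tail_le_of_l1_le hlam.le (hmin.2 x c hfeas) S T
  have hres : τ' * l2norm (A *ᵥ (x - xh) + (c - ch)) ≤ τ' * (2 * ε) := by
    refine mul_le_mul_of_nonneg_left ?_ hτ.le
    linarith [l2norm_mulVec_sub_add_sub_le A x xh c ch y, hmin.1]
  have hnsp := h (x - xh) (c - ch) S T hS hT
  rw [div_mul_eq_mul_div, div_mul_eq_mul_div, ← add_div, le_div_iff₀ (sub_pos.2 hρ1)]
  linarith

/-- tail bound for the error of the minimizer under the ℓ¹-robust NSP. -/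
theorem tail_bound_of_l1RNSP {N m : ℕ} (s k : ℕ)
    (hs1 : 1 ≤ s) (hsN : s ≤ N) (hk1 : 1 ≤ k) (hkm : k ≤ m)
    (lam : ℝ) (hlam : 0 < lam)
    (A : Matrix (Fin m) (Fin N) ℂ) (ρ τ' : ℝ) (hρ0 : 0 < ρ) (hρ1 : ρ < 1) (hτ : 0 < τ')
    (h : L1RNSP A s k lam ρ τ')
    (x : Fin N → ℂ) (c y : Fin m → ℂ) (ε : ℝ) (hε : 0 < ε)
    (hfeas : l2norm (A.mulVec x + c - y) ≤ ε)
    (xh : Fin N → ℂ) (ch : Fin m → ℂ) (hmin : IsMinimizer A y lam ε xh ch)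
    (S : Finset (Fin N)) (T : Finset (Fin m)) (hS : S.card ≤ s) (hT : T.card ≤ k) :
    l1norm (restr (x - xh) Sᶜ) + lam * l1norm (restr (c - ch) Tᶜ) ≤
      (2 / (1 - ρ)) * (l1norm (restr x Sᶜ) + lam * l1norm (restr c Tᶜ)) +
        (2 * τ' / (1 - ρ)) * ε :=
  tail_bound_of_l1RNSP_general s k lam hlam A ρ τ' hρ1 hτ h x c y ε hfeas xh ch hmin S T hS hT
end
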